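/- Let M = M₁ ×_{f₁,f₂} M₂ be a doubly warped product, ζ = ζ₁ + ζ₂ and X = X₁ + X₂ lifted vector fields. Then g(D_X ζ, ζ) = f₂²g₁(D¹_{X₁}ζ₁, ζ₁) + f₁²g₂(D²_{X₂}ζ₂, ζ₂) + f₁X₁(f₁)‖ζ₂‖₂² + f₂X₂(f₂)‖ζ₁‖₁². Consequently, if Xᵢ(fᵢ) = 0 and each ζᵢ has constant length along πᵢ∘α for the integral curve α of X, then ζ has constant length along α. -/

import Mathlib

noncomputable section

open scoped BigOperators

/-- The model space of an `n`-dimensional manifold (global chart). -/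
abbrev E (n : ℕ) := Fin n → ℝ

section Core
variable {α : Type*} [NormedAddCommGroup α] [NormedSpace ℝ α]

/-- Directional derivative `X(φ)` of a scalar function along a vector field. -/
def dd (X : α → α) (φ : α → ℝ) (p : α) : ℝ := fderiv ℝ φ p (X p)

/-- Lie bracket `[X,Y]` of vector fields. -/
def br (X Y : α → α) (p : α) : α := fderiv ℝ Y p (X p) - fderiv ℝ X p (Y p)

/-- Lie derivative of a metric: `(L_ζ g)(X,Y)(p)`. -/
def lieD (g : α → α → α → ℝ) (ζ X Y : α → α) (p : α) : ℝ :=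
  dd ζ (fun q => g q (X q) (Y q)) p - g p (br ζ X p) (Y p) - g p (X p) (br ζ Y p)

/-- `g` is a smooth field of symmetric bilinear forms. -/
structure IsMetric (g : α → α → α → ℝ) : Prop where
  linL : ∀ p w, IsLinearMap ℝ (fun v => g p v w)
  linR : ∀ p v, IsLinearMap ℝ (g p v)
  symm : ∀ p v w, g p v w = g p w v
  smooth : ∀ v w, ContDiff ℝ (⊤ : ℕ∞) (fun p => g p v w)

/-- Positive definiteness (Riemannian metric). -/
def PosDef (g : α → α → α → ℝ) : Prop := ∀ p v, v ≠ 0 → 0 < g p v v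

/-- `ζ` is a conformal vector field for `g` with conformal factor `ρ`. -/
def IsConformal (g : α → α → α → ℝ) (ζ : α → α) (ρ : α → ℝ) : Prop :=
  ∀ X Y : α → α, ContDiff ℝ (⊤ : ℕ∞) X → ContDiff ℝ (⊤ : ℕ∞) Y → ∀ p,
    lieD g ζ X Y p = ρ p * g p (X p) (Y p)

/-- Conformality restricted to a subset. -/
def IsConformalOn (g : α → α → α → ℝ) (ζ : α → α) (ρ : α → ℝ) (S : Set α) : Prop :=
  ∀ X Y : α → α, ContDiff ℝ (⊤ : ℕ∞) X → ContDiff ℝ (⊤ : ℕ∞) Y → ∀ p ∈ S,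
    lieD g ζ X Y p = ρ p * g p (X p) (Y p)

/-- `ζ` is a Killing vector field for `g`. -/
def IsKilling (g : α → α → α → ℝ) (ζ : α → α) : Prop := IsConformal g ζ (fun _ => 0)

/-- Koszul characterization of the Levi-Civita connection of `g`. -/
def IsLC (g : α → α → α → ℝ) (D : (α → α) → (α → α) → (α → α)) : Prop :=
  ∀ X Y Z : α → α, ContDiff ℝ (⊤ : ℕ∞) X → ContDiff ℝ (⊤ : ℕ∞) Y → ContDiff ℝ (⊤ : ℕ∞) Z → ∀ p,
    2 * g p (D X Y p) (Z p) =
      dd X (fun q => g q (Y q) (Z q)) p + dd Y (fun q => g q (X q) (Z q)) p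
        - dd Z (fun q => g q (X q) (Y q)) p
        + g p (br X Y p) (Z p) - g p (br X Z p) (Y p) - g p (br Y Z p) (X p)

/-- Koszul characterization of the Levi-Civita connection, restricted to a subset. -/
def IsLCOn (g : α → α → α → ℝ) (D : (α → α) → (α → α) → (α → α)) (S : Set α) : Prop :=
  ∀ X Y Z : α → α, ContDiff ℝ (⊤ : ℕ∞) X → ContDiff ℝ (⊤ : ℕ∞) Y → ContDiff ℝ (⊤ : ℕ∞) Z → ∀ p ∈ S,
    2 * g p (D X Y p) (Z p) =
      dd X (fun q => g q (Y q) (Z q)) p + dd Y (fun q => g q (X q) (Z q)) p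
        - dd Z (fun q => g q (X q) (Y q)) p
        + g p (br X Y p) (Z p) - g p (br X Z p) (Y p) - g p (br Y Z p) (X p)

end Core

section Warped
variable {n₁ n₂ : ℕ}

/-- The doubly warped product metric `g = f₂² g₁ ⊕ f₁² g₂` on `M₁ × M₂`. -/
def dwg (g₁ : E n₁ → E n₁ → E n₁ → ℝ) (g₂ : E n₂ → E n₂ → E n₂ → ℝ)
    (f₁ : E n₁ → ℝ) (f₂ : E n₂ → ℝ) :
    (E n₁ × E n₂) → (E n₁ × E n₂) → (E n₁ × E n₂) → ℝ :=
  fun p v w => (f₂ p.2)^2 * g₁ p.1 v.1 w.1 + (f₁ p.1)^2 * g₂ p.2 v.2 w.2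

/-- Lift of a vector field on `M₁` to the product. -/
def lift1 (ζ₁ : E n₁ → E n₁) : (E n₁ × E n₂) → (E n₁ × E n₂) := fun p => (ζ₁ p.1, 0)

/-- Lift of a vector field on `M₂` to the product. -/
def lift2 (ζ₂ : E n₂ → E n₂) : (E n₁ × E n₂) → (E n₁ × E n₂) := fun p => (0, ζ₂ p.2)

/-- The sum `ζ₁ + ζ₂` of lifted vector fields. -/
def sumVF (ζ₁ : E n₁ → E n₁) (ζ₂ : E n₂ → E n₂) : (E n₁ × E n₂) → (E n₁ × E n₂) :=
  fun p => (ζ₁ p.1, ζ₂ p.2)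

end Warped


section Aux

lemma koszul_self {α : Type*} [NormedAddCommGroup α] [NormedSpace ℝ α]
    {g : α → α → α → ℝ} {D : (α → α) → (α → α) → (α → α)}
    (hD : IsLC g D) (hz : ∀ p x, g p (0:α) x = 0)
    {X S : α → α} (hX : ContDiff ℝ (⊤ : ℕ∞) X) (hS : ContDiff ℝ (⊤ : ℕ∞) S) (p : α) :
    2 * g p (D X S p) (S p) = dd X (fun q => g q (S q) (S q)) p := by
  have h := hD X S S hX hS hS p
  have hbr : br S S p = 0 := sub_self _
  rw [hbr, hz] at h
  linarith

lemma metric_expand {n : ℕ} {g : E n → E n → E n → ℝ}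
    (hL : ∀ p w, IsLinearMap ℝ (fun v => g p v w)) (hR : ∀ p v, IsLinearMap ℝ (g p v))
    (p v w : E n) :
    g p v w = ∑ i, ∑ j, v i * w j * g p (Pi.single i 1) (Pi.single j 1) := by
  have hv : v = ∑ i, v i • (Pi.single i 1 : E n) := by
    ext k; simp [Finset.sum_apply, Pi.single_apply, Finset.sum_ite_eq']
  have hw : w = ∑ j, w j • (Pi.single j 1 : E n) := by
    ext k; simp [Finset.sum_apply, Pi.single_apply, Finset.sum_ite_eq']
  have e1 : g p (∑ i, v i • (Pi.single i 1 : E n)) w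
      = ∑ i, g p (v i • (Pi.single i 1 : E n)) w :=
    map_sum (IsLinearMap.mk' _ (hL p w)) _ _
  calc g p v w = ∑ i, g p (v i • (Pi.single i 1 : E n)) w := by rw [← e1, ← hv]
    _ = ∑ i, v i * g p (Pi.single i 1) w := by
        refine Finset.sum_congr rfl fun i _ => ?_
        exact (hL p w).map_smul (v i) _
    _ = ∑ i, ∑ j, v i * w j * g p (Pi.single i 1) (Pi.single j 1) := by
        refine Finset.sum_congr rfl fun i _ => ?_
        have e2 : g p (Pi.single i 1) (∑ j, w j • (Pi.single j 1 : E n))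
            = ∑ j, g p (Pi.single i 1) (w j • (Pi.single j 1 : E n)) :=
          map_sum (IsLinearMap.mk' _ (hR p (Pi.single i 1))) _ _
        rw [show g p (Pi.single i 1) w
            = ∑ j, g p (Pi.single i 1) (w j • (Pi.single j 1 : E n)) by rw [← e2, ← hw],
          Finset.mul_sum]
        refine Finset.sum_congr rfl fun j _ => ?_
        rw [(hR p _).map_smul (w j)]
        simp [mul_comm, mul_assoc, mul_left_comm]

lemma metric_vf_smooth {n : ℕ} {g : E n → E n → E n → ℝ}
    (hL : ∀ p w, IsLinearMap ℝ (fun v => g p v w)) (hR : ∀ p v, IsLinearMap ℝ (g p v))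
    (hsm : ∀ v w, ContDiff ℝ (⊤ : ℕ∞) (fun p => g p v w))
    {ζ η : E n → E n} (hζ : ContDiff ℝ (⊤ : ℕ∞) ζ) (hη : ContDiff ℝ (⊤ : ℕ∞) η) :
    ContDiff ℝ (⊤ : ℕ∞) (fun q => g q (ζ q) (η q)) := by
  have : (fun q => g q (ζ q) (η q))
      = fun q => ∑ i, ∑ j, ζ q i * η q j * g q (Pi.single i 1) (Pi.single j 1) := by
    funext q; exact metric_expand hL hR q (ζ q) (η q)
  rw [this]
  refine ContDiff.sum fun i _ => ContDiff.sum fun j _ => ?_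
  exact (((contDiff_pi.mp hζ i).mul (contDiff_pi.mp hη j)).mul (hsm _ _))

end Aux

/-- The identity for `g(D_X ζ, ζ)` on a doubly warped product, and the
consequence: if `Xᵢ(fᵢ) = 0` and each `ζᵢ` has constant length along `πᵢ ∘ α`, then
`ζ = ζ₁ + ζ₂` has constant length along the integral curve `α` of `X`. -/
theorem doubly_warped_constant_length {n₁ n₂ : ℕ}
    (g₁ : E n₁ → E n₁ → E n₁ → ℝ) (g₂ : E n₂ → E n₂ → E n₂ → ℝ)
    (f₁ : E n₁ → ℝ) (f₂ : E n₂ → ℝ)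
    (hg₁ : IsMetric g₁) (hg₂ : IsMetric g₂)
    (hg₁p : PosDef g₁) (hg₂p : PosDef g₂)
    (hf₁ : ContDiff ℝ (⊤ : ℕ∞) f₁) (hf₂ : ContDiff ℝ (⊤ : ℕ∞) f₂)
    (hf₁0 : ∀ q, 0 < f₁ q) (hf₂0 : ∀ q, 0 < f₂ q)
    (D : ((E n₁ × E n₂) → (E n₁ × E n₂)) → ((E n₁ × E n₂) → (E n₁ × E n₂)) →
      ((E n₁ × E n₂) → (E n₁ × E n₂)))
    (D₁ : (E n₁ → E n₁) → (E n₁ → E n₁) → (E n₁ → E n₁))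
    (D₂ : (E n₂ → E n₂) → (E n₂ → E n₂) → (E n₂ → E n₂))
    (hD : IsLC (dwg g₁ g₂ f₁ f₂) D) (hD₁ : IsLC g₁ D₁) (hD₂ : IsLC g₂ D₂)
    (ζ₁ X₁ : E n₁ → E n₁) (ζ₂ X₂ : E n₂ → E n₂)
    (hζ₁ : ContDiff ℝ (⊤ : ℕ∞) ζ₁) (hζ₂ : ContDiff ℝ (⊤ : ℕ∞) ζ₂)
    (hX₁ : ContDiff ℝ (⊤ : ℕ∞) X₁) (hX₂ : ContDiff ℝ (⊤ : ℕ∞) X₂)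
    (α : ℝ → E n₁ × E n₂)
    (hα : ∀ t, HasDerivAt α ((sumVF X₁ X₂) (α t)) t)
    (hXf₁ : ∀ q, fderiv ℝ f₁ q (X₁ q) = 0) (hXf₂ : ∀ q, fderiv ℝ f₂ q (X₂ q) = 0)
    (hcl₁ : ∃ c : ℝ, ∀ t, g₁ (α t).1 (ζ₁ (α t).1) (ζ₁ (α t).1) = c)
    (hcl₂ : ∃ c : ℝ, ∀ t, g₂ (α t).2 (ζ₂ (α t).2) (ζ₂ (α t).2) = c) :
    (∀ p : E n₁ × E n₂,
      dwg g₁ g₂ f₁ f₂ p (D (sumVF X₁ X₂) (sumVF ζ₁ ζ₂) p)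
          ((sumVF ζ₁ ζ₂) p) =
        (f₂ p.2)^2 * g₁ p.1 (D₁ X₁ ζ₁ p.1) (ζ₁ p.1)
          + (f₁ p.1)^2 * g₂ p.2 (D₂ X₂ ζ₂ p.2) (ζ₂ p.2)
          + f₁ p.1 * fderiv ℝ f₁ p.1 (X₁ p.1) * g₂ p.2 (ζ₂ p.2) (ζ₂ p.2)
          + f₂ p.2 * fderiv ℝ f₂ p.2 (X₂ p.2) * g₁ p.1 (ζ₁ p.1) (ζ₁ p.1)) ∧
    (∃ c : ℝ, ∀ t,
      dwg g₁ g₂ f₁ f₂ (α t) ((sumVF ζ₁ ζ₂) (α t)) ((sumVF ζ₁ ζ₂) (α t)) = c) := by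
  constructor
  · -- the pointwise identity
    intro p
    have hG₁ : ContDiff ℝ (⊤ : ℕ∞) (fun x : E n₁ => g₁ x (ζ₁ x) (ζ₁ x)) :=
      metric_vf_smooth hg₁.linL hg₁.linR hg₁.smooth hζ₁ hζ₁
    have hG₂ : ContDiff ℝ (⊤ : ℕ∞) (fun x : E n₂ => g₂ x (ζ₂ x) (ζ₂ x)) :=
      metric_vf_smooth hg₂.linL hg₂.linR hg₂.smooth hζ₂ hζ₂
    have hXp : ContDiff ℝ (⊤ : ℕ∞) (sumVF X₁ X₂ : E n₁ × E n₂ → E n₁ × E n₂) :=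
      ContDiff.prodMk (hX₁.comp contDiff_fst) (hX₂.comp contDiff_snd)
    have hSp : ContDiff ℝ (⊤ : ℕ∞) (sumVF ζ₁ ζ₂ : E n₁ × E n₂ → E n₁ × E n₂) :=
      ContDiff.prodMk (hζ₁.comp contDiff_fst) (hζ₂.comp contDiff_snd)
    have hz₁ : ∀ (q : E n₁) x, g₁ q (0 : E n₁) x = 0 := fun q x => (hg₁.linL q x).map_zero
    have hz₂ : ∀ (q : E n₂) x, g₂ q (0 : E n₂) x = 0 := fun q x => (hg₂.linL q x).map_zero
    have hz : ∀ (q : E n₁ × E n₂) x, dwg g₁ g₂ f₁ f₂ q (0 : E n₁ × E n₂) x = 0 := by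
      intro q x
      simp [dwg, hz₁, hz₂]
    have k1 := koszul_self hD hz hXp hSp p
    have k2 := koszul_self hD₁ hz₁ hX₁ hζ₁ p.1
    have k3 := koszul_self hD₂ hz₂ hX₂ hζ₂ p.2
    have key : dd (sumVF X₁ X₂)
        (fun q => dwg g₁ g₂ f₁ f₂ q (sumVF ζ₁ ζ₂ q) (sumVF ζ₁ ζ₂ q)) p
        = 2 * f₂ p.2 * fderiv ℝ f₂ p.2 (X₂ p.2) * g₁ p.1 (ζ₁ p.1) (ζ₁ p.1)
          + (f₂ p.2)^2 * fderiv ℝ (fun x : E n₁ => g₁ x (ζ₁ x) (ζ₁ x)) p.1 (X₁ p.1)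
          + 2 * f₁ p.1 * fderiv ℝ f₁ p.1 (X₁ p.1) * g₂ p.2 (ζ₂ p.2) (ζ₂ p.2)
          + (f₁ p.1)^2 * fderiv ℝ (fun x : E n₂ => g₂ x (ζ₂ x) (ζ₂ x)) p.2 (X₂ p.2) := by
      have hf2' : HasFDerivAt (fun q : E n₁ × E n₂ => f₂ q.2)
          ((fderiv ℝ f₂ p.2).comp (ContinuousLinearMap.snd ℝ (E n₁) (E n₂))) p :=
        ((hf₂.differentiable (by simp) p.2).hasFDerivAt).comp p hasFDerivAt_snd
      have hf1' : HasFDerivAt (fun q : E n₁ × E n₂ => f₁ q.1)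
          ((fderiv ℝ f₁ p.1).comp (ContinuousLinearMap.fst ℝ (E n₁) (E n₂))) p :=
        ((hf₁.differentiable (by simp) p.1).hasFDerivAt).comp p hasFDerivAt_fst
      have hG1' : HasFDerivAt (fun q : E n₁ × E n₂ => g₁ q.1 (ζ₁ q.1) (ζ₁ q.1))
          ((fderiv ℝ (fun x : E n₁ => g₁ x (ζ₁ x) (ζ₁ x)) p.1).comp
            (ContinuousLinearMap.fst ℝ (E n₁) (E n₂))) p :=
        ((hG₁.differentiable (by simp) p.1).hasFDerivAt).comp p hasFDerivAt_fst
      have hG2' : HasFDerivAt (fun q : E n₁ × E n₂ => g₂ q.2 (ζ₂ q.2) (ζ₂ q.2))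
          ((fderiv ℝ (fun x : E n₂ => g₂ x (ζ₂ x) (ζ₂ x)) p.2).comp
            (ContinuousLinearMap.snd ℝ (E n₁) (E n₂))) p :=
        ((hG₂.differentiable (by simp) p.2).hasFDerivAt).comp p hasFDerivAt_snd
      have hH : HasFDerivAt (fun q : E n₁ × E n₂ => (f₂ q.2 * f₂ q.2) * g₁ q.1 (ζ₁ q.1) (ζ₁ q.1)
              + (f₁ q.1 * f₁ q.1) * g₂ q.2 (ζ₂ q.2) (ζ₂ q.2)) _ p :=
        (((hf2'.mul hf2').mul hG1').add ((hf1'.mul hf1').mul hG2'))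
      have heq : (fun q => dwg g₁ g₂ f₁ f₂ q (sumVF ζ₁ ζ₂ q) (sumVF ζ₁ ζ₂ q))
          = fun q : E n₁ × E n₂ => (f₂ q.2 * f₂ q.2) * g₁ q.1 (ζ₁ q.1) (ζ₁ q.1)
              + (f₁ q.1 * f₁ q.1) * g₂ q.2 (ζ₂ q.2) (ζ₂ q.2) := by
        funext q; simp [dwg, sumVF]; ring
      rw [dd, heq, hH.fderiv]
      simp [ContinuousLinearMap.add_apply, ContinuousLinearMap.smul_apply,
        ContinuousLinearMap.comp_apply, smul_eq_mul, sumVF]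
      ring
    simp only [dd] at k1 k2 k3 key
    have goal2 : 2 * dwg g₁ g₂ f₁ f₂ p (D (sumVF X₁ X₂) (sumVF ζ₁ ζ₂) p) (sumVF ζ₁ ζ₂ p)
        = 2 * ((f₂ p.2)^2 * g₁ p.1 (D₁ X₁ ζ₁ p.1) (ζ₁ p.1)
          + (f₁ p.1)^2 * g₂ p.2 (D₂ X₂ ζ₂ p.2) (ζ₂ p.2)
          + f₁ p.1 * fderiv ℝ f₁ p.1 (X₁ p.1) * g₂ p.2 (ζ₂ p.2) (ζ₂ p.2)
          + f₂ p.2 * fderiv ℝ f₂ p.2 (X₂ p.2) * g₁ p.1 (ζ₁ p.1) (ζ₁ p.1)) := by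
      rw [show (2 : ℝ) * dwg g₁ g₂ f₁ f₂ p (D (sumVF X₁ X₂) (sumVF ζ₁ ζ₂) p) (sumVF ζ₁ ζ₂ p)
          = _ from k1, key, ← k2, ← k3]
      ring
    linarith
  · -- constant length along the integral curve
    obtain ⟨c₁, hc₁⟩ := hcl₁
    obtain ⟨c₂, hc₂⟩ := hcl₂
    have hα1 : ∀ t, HasDerivAt (fun t => (α t).1) (X₁ (α t).1) t := fun t => (hα t).fst
    have hα2 : ∀ t, HasDerivAt (fun t => (α t).2) (X₂ (α t).2) t := fun t => (hα t).snd
    have hd1 : ∀ t, HasDerivAt (fun t => f₁ (α t).1) 0 t := by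
      intro t
      have h2 := ((hf₁.differentiable (by simp) _).hasFDerivAt).comp_hasDerivAt t (hα1 t)
      simpa [hXf₁, Function.comp_def] using h2
    have hd2 : ∀ t, HasDerivAt (fun t => f₂ (α t).2) 0 t := by
      intro t
      have h2 := ((hf₂.differentiable (by simp) _).hasFDerivAt).comp_hasDerivAt t (hα2 t)
      simpa [hXf₂, Function.comp_def] using h2
    have hcf1 : ∀ t, f₁ (α t).1 = f₁ (α 0).1 := fun t =>
      is_const_of_deriv_eq_zero (fun s => (hd1 s).differentiableAt)
        (fun s => (hd1 s).deriv) t 0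
    have hcf2 : ∀ t, f₂ (α t).2 = f₂ (α 0).2 := fun t =>
      is_const_of_deriv_eq_zero (fun s => (hd2 s).differentiableAt)
        (fun s => (hd2 s).deriv) t 0
    refine ⟨(f₂ (α 0).2)^2 * c₁ + (f₁ (α 0).1)^2 * c₂, fun t => ?_⟩
    simp [dwg, sumVF, hc₁ t, hc₂ t, hcf1 t, hcf2 t]
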